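/- Let $M, K, T, \Delta$ be positive integers and let $(s_m, e_m)$, $1 \le m \le M$, be i.i.d. random intervals obtained by drawing $s, e$ i.i.d. uniform on $\{1,\dots,T\}$ and setting $s_m = s\wedge e$, $e_m = s\vee e$. Let $\eta_1, \dots, \eta_K$ be fixed change-points, each admitting at least $p := 2(\Delta/(8T))^2$ as a lower bound on the probability that one random interval is well-positioned around it, i.e. $\eta_k - \Delta/4 < s_m < \eta_k - \Delta/8$ and $\eta_k + \Delta/8 < e_m < \eta_k + \Delta/4$. Then the probability that some $\eta_k$ is missed by all $M$ intervals is at most $K(1-p)^M \le \frac{T}{\Delta}\exp\left(-\frac{M\Delta^2}{32 T^2}\right)$, using $K \le T/\Delta$ and $1 - p \le e^{-p}$. -/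
import Mathlib


open scoped Classical

/-- A draw `x = (a, b) ∈ Fin T × Fin T`, encoding the uniform pair
`(s, e) = (a + 1, b + 1) ∈ {1, …, T}²`, is well-positioned around the change-point
`η k`: the left endpoint `s ∧ e` lies in `(η k − Δ/4, η k − Δ/8)` and the right
endpoint `s ∨ e` lies in `(η k + Δ/8, η k + Δ/4)`. -/
def WellPositioned {T : ℕ} (Δ : ℕ) (ηk : ℕ) (x : Fin T × Fin T) : Prop :=
  (ηk : ℝ) - (Δ : ℝ) / 4 < (min ((x.1 : ℕ) + 1) ((x.2 : ℕ) + 1) : ℕ) ∧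
  ((min ((x.1 : ℕ) + 1) ((x.2 : ℕ) + 1) : ℕ) : ℝ) < (ηk : ℝ) - (Δ : ℝ) / 8 ∧
  (ηk : ℝ) + (Δ : ℝ) / 8 < (max ((x.1 : ℕ) + 1) ((x.2 : ℕ) + 1) : ℕ) ∧
  ((max ((x.1 : ℕ) + 1) ((x.2 : ℕ) + 1) : ℕ) : ℝ) < (ηk : ℝ) + (Δ : ℝ) / 4

/-- Lemma 7 (coverage by random intervals): if each change-point `η k` admits
`p = 2 (Δ/(8T))²` as a lower bound on the probability that a single uniform draw
is well-positioned around it, then the probability (computed by counting over the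
sample space `(Fin T × Fin T)^M` of `M` i.i.d. uniform draws) that some
change-point is missed by all `M` draws is at most `K (1 − p)^M`, which in turn is
at most `(T/Δ) exp(−M Δ² / (32 T²))` provided `K ≤ T/Δ`. -/
theorem all_changepoints_covered_prob
    (M K T Δ : ℕ) (hM : 0 < M) (hK : 0 < K) (hT : 0 < T) (hΔ : 0 < Δ)
    (hΔT : Δ ≤ T) (η : Fin K → ℕ)
    (hKTΔ : (K : ℝ) ≤ (T : ℝ) / (Δ : ℝ))
    (hp : ∀ k : Fin K,
      2 * ((Δ : ℝ) / (8 * (T : ℝ))) ^ 2 ≤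
        ((Finset.univ.filter fun x : Fin T × Fin T =>
            WellPositioned Δ (η k) x).card : ℝ) / (T : ℝ) ^ 2) :
    ((Finset.univ.filter fun f : Fin M → Fin T × Fin T =>
        ∃ k : Fin K, ∀ m : Fin M, ¬ WellPositioned Δ (η k) (f m)).card : ℝ) /
        (T : ℝ) ^ (2 * M) ≤
      (K : ℝ) * (1 - 2 * ((Δ : ℝ) / (8 * (T : ℝ))) ^ 2) ^ M ∧
    (K : ℝ) * (1 - 2 * ((Δ : ℝ) / (8 * (T : ℝ))) ^ 2) ^ M ≤
      ((T : ℝ) / (Δ : ℝ)) *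
        Real.exp (-(M : ℝ) * (Δ : ℝ) ^ 2 / (32 * (T : ℝ) ^ 2)) := by

  have hT' : (0:ℝ) < T := by exact_mod_cast hT
  have hΔ' : (0:ℝ) < Δ := by exact_mod_cast hΔ
  have hΔT' : (Δ:ℝ) ≤ T := by exact_mod_cast hΔT
  set p : ℝ := 2 * ((Δ : ℝ) / (8 * (T : ℝ))) ^ 2 with hpdef
  have hp1 : p ≤ 1 := by
    have h8 : (0:ℝ) < 8 * T := by linarith
    have hd : (Δ:ℝ) / (8*T) ≤ 1/8 := by
      rw [div_le_div_iff₀ h8 (by norm_num)]; linarith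
    have hd0 : (0:ℝ) ≤ (Δ:ℝ)/(8*T) := by positivity
    nlinarith
  have hp0 : 0 ≤ p := by positivity
  have h1p : 0 ≤ 1 - p := by linarith
  set Sneg : Fin K → Finset (Fin T × Fin T) :=
    fun k => Finset.univ.filter (fun x => ¬ WellPositioned Δ (η k) x) with hS
  have hb : ∀ k, ((Sneg k).card : ℝ) ≤ (1 - p) * (T:ℝ)^2 := by
    intro k
    have h1 := hp k
    have h2 : (Finset.univ.filter fun x : Fin T × Fin T =>
        WellPositioned Δ (η k) x).card + (Sneg k).card = T * T := by
      rw [hS, Finset.card_filter_add_card_filter_not]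
      simp [Finset.card_univ]
    have hT2 : (0:ℝ) < (T:ℝ)^2 := by positivity
    have h3 : p * (T:ℝ)^2 ≤ ((Finset.univ.filter fun x : Fin T × Fin T =>
        WellPositioned Δ (η k) x).card : ℝ) := by
      exact (le_div_iff₀ hT2).mp h1
    have h2' : ((Finset.univ.filter fun x : Fin T × Fin T =>
        WellPositioned Δ (η k) x).card : ℝ) + ((Sneg k).card : ℝ) = (T:ℝ) * T := by
      exact_mod_cast h2
    nlinarith
  have hcard : ∀ k : Fin K, (Finset.univ.filter fun f : Fin M → Fin T × Fin T =>
      ∀ m, ¬ WellPositioned Δ (η k) (f m)).card = (Sneg k).card ^ M := by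
    intro k
    have heq : (Finset.univ.filter fun f : Fin M → Fin T × Fin T =>
        ∀ m, ¬ WellPositioned Δ (η k) (f m)) = Fintype.piFinset (fun _ => Sneg k) := by
      ext f
      simp [Fintype.mem_piFinset, hS]
    rw [heq, Fintype.card_piFinset]
    simp
  have hsub : (Finset.univ.filter fun f : Fin M → Fin T × Fin T =>
      ∃ k : Fin K, ∀ m : Fin M, ¬ WellPositioned Δ (η k) (f m)) ⊆
      Finset.univ.biUnion (fun k : Fin K => Finset.univ.filter
        fun f : Fin M → Fin T × Fin T => ∀ m, ¬ WellPositioned Δ (η k) (f m)) := by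
    intro f hf
    simp only [Finset.mem_filter, Finset.mem_biUnion] at *
    obtain ⟨-, k, hk⟩ := hf
    exact ⟨k, Finset.mem_univ k, Finset.mem_univ f, hk⟩
  have hUB : ((Finset.univ.filter fun f : Fin M → Fin T × Fin T =>
      ∃ k : Fin K, ∀ m : Fin M, ¬ WellPositioned Δ (η k) (f m)).card : ℝ) ≤
      (K : ℝ) * ((1 - p) * (T:ℝ)^2) ^ M := by
    calc ((Finset.univ.filter fun f : Fin M → Fin T × Fin T =>
        ∃ k : Fin K, ∀ m : Fin M, ¬ WellPositioned Δ (η k) (f m)).card : ℝ)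
        ≤ ((Finset.univ.biUnion (fun k : Fin K => Finset.univ.filter
            fun f : Fin M → Fin T × Fin T =>
              ∀ m, ¬ WellPositioned Δ (η k) (f m))).card : ℝ) := by
          exact_mod_cast Finset.card_le_card hsub
      _ ≤ ∑ k : Fin K, ((Finset.univ.filter fun f : Fin M → Fin T × Fin T =>
            ∀ m, ¬ WellPositioned Δ (η k) (f m)).card : ℝ) := by
          exact_mod_cast Finset.card_biUnion_le
      _ = ∑ k : Fin K, ((Sneg k).card : ℝ) ^ M := by
          refine Finset.sum_congr rfl fun k _ => ?_
          rw [hcard k]; push_cast; ring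
      _ ≤ ∑ k : Fin K, ((1 - p) * (T:ℝ)^2) ^ M := by
          refine Finset.sum_le_sum fun k _ => ?_
          exact pow_le_pow_left₀ (by positivity) (hb k) M
      _ = (K : ℝ) * ((1 - p) * (T:ℝ)^2) ^ M := by
          simp [Finset.sum_const, mul_comm]
  constructor
  · have hTpow : (0:ℝ) < (T:ℝ) ^ (2 * M) := by positivity
    rw [div_le_iff₀ hTpow]
    calc ((Finset.univ.filter fun f : Fin M → Fin T × Fin T =>
        ∃ k : Fin K, ∀ m : Fin M, ¬ WellPositioned Δ (η k) (f m)).card : ℝ)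
        ≤ (K : ℝ) * ((1 - p) * (T:ℝ)^2) ^ M := hUB
      _ = (K : ℝ) * (1 - p) ^ M * (T:ℝ) ^ (2 * M) := by
          rw [mul_pow, pow_mul]; ring
  · have h2 : (1 - p) ^ M ≤ (Real.exp (-p)) ^ M := by
      refine pow_le_pow_left₀ h1p ?_ M
      linarith [Real.add_one_le_exp (-p)]
    have h3 : (Real.exp (-p)) ^ M = Real.exp (-(M:ℝ) * (Δ:ℝ)^2 / (32 * (T:ℝ)^2)) := by
      rw [← Real.exp_nat_mul]
      congr 1
      rw [hpdef]
      field_simp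
      ring
    calc (K : ℝ) * (1 - p) ^ M
        ≤ ((T:ℝ)/(Δ:ℝ)) * (1 - p) ^ M :=
          mul_le_mul_of_nonneg_right hKTΔ (pow_nonneg h1p M)
      _ ≤ ((T:ℝ)/(Δ:ℝ)) * (Real.exp (-p)) ^ M :=
          mul_le_mul_of_nonneg_left h2 (by positivity)
      _ = ((T:ℝ)/(Δ:ℝ)) * Real.exp (-(M:ℝ) * (Δ:ℝ)^2 / (32 * (T:ℝ)^2)) := by rw [h3]
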